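/- Let X and Y be complex Banach spaces and suppose that Y or X* has the bounded approximation property. If there exists a continuous projection from L(X,Y) onto K(X,Y) and Y is complemented in its bidual Y**, then K(X,Y) is complemented in its bidual K(X,Y)**. -/

import Mathlib

open Filter Topology NormedSpace
open scoped ENNReal

noncomputable section

/-- `ℓ∞` : the Banach space of bounded complex sequences with the sup norm. -/
abbrev LinftySeq : Type := ↥(lp (fun _ : ℕ => ℂ) ∞)

/-- The predicate on `ℓ∞` of belonging to `c₀` (i.e. tending to zero). -/
def IsC0 (α : LinftySeq) : Prop := Tendsto (fun k => α k) atTop (𝓝 (0 : ℂ))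

/-- `c₀` as a (closed) submodule of `ℓ∞`, with the induced sup norm. -/
def c0 : Submodule ℂ LinftySeq where
  carrier := {α | IsC0 α}
  add_mem' := by
    intro a b ha hb
    have := ha.add hb
    simpa [IsC0, lp.coeFn_add] using this
  zero_mem' := by
    simp only [Set.mem_setOf_eq, IsC0, lp.coeFn_zero, Pi.zero_apply]
    exact tendsto_const_nhds
  smul_mem' := by
    intro c a ha
    have := ha.const_mul c
    simpa [IsC0, lp.coeFn_smul, smul_eq_mul] using this

/-- The subspace `K(X,Y)` of compact operators inside `L(X,Y)`. -/
abbrev KOp (X Y : Type*) [NormedAddCommGroup X] [NormedSpace ℂ X]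
    [NormedAddCommGroup Y] [NormedSpace ℂ Y] : Submodule ℂ (X →L[ℂ] Y) :=
  compactOperator (RingHom.id ℂ) X Y

/-- The canonical basis vector `e k` of `c₀`. -/
def eSeq (k : ℕ) : ↥c0 :=
  ⟨lp.single ∞ k (1 : ℂ), by
    have h : ∀ᶠ j in atTop, (lp.single ∞ k (1 : ℂ) : ∀ _ : ℕ, ℂ) j = 0 := by
      filter_upwards [eventually_gt_atTop k] with j hj
      exact lp.single_apply_ne ∞ k _ (by omega)
    exact Tendsto.congr' (h.mono fun j hj => hj.symm) tendsto_const_nhds⟩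

/-- The topological dual, as `NormedSpace.Dual` was in the older Mathlib (now `StrongDual`). -/
def NormedSpace.Dual (𝕜 : Type*) [NontriviallyNormedField 𝕜] (E : Type*)
    [SeminormedAddCommGroup E] [NormedSpace 𝕜 E] : Type _ := E →L[𝕜] 𝕜

instance NormedSpace.Dual.instSeminormedAddCommGroup (𝕜 : Type*) [NontriviallyNormedField 𝕜]
    (E : Type*) [SeminormedAddCommGroup E] [NormedSpace 𝕜 E] :
    SeminormedAddCommGroup (NormedSpace.Dual 𝕜 E) :=
  inferInstanceAs (SeminormedAddCommGroup (E →L[𝕜] 𝕜))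

instance NormedSpace.Dual.instNormedAddCommGroup (𝕜 : Type*) [NontriviallyNormedField 𝕜]
    (E : Type*) [NormedAddCommGroup E] [NormedSpace 𝕜 E] :
    NormedAddCommGroup (NormedSpace.Dual 𝕜 E) :=
  inferInstanceAs (NormedAddCommGroup (E →L[𝕜] 𝕜))

instance NormedSpace.Dual.instNormedSpace (𝕜 : Type*) [NontriviallyNormedField 𝕜]
    (E : Type*) [SeminormedAddCommGroup E] [NormedSpace 𝕜 E] :
    NormedSpace 𝕜 (NormedSpace.Dual 𝕜 E) :=
  inferInstanceAs (NormedSpace 𝕜 (E →L[𝕜] 𝕜))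

instance NormedSpace.Dual.instFunLike (𝕜 : Type*) [NontriviallyNormedField 𝕜]
    (E : Type*) [SeminormedAddCommGroup E] [NormedSpace 𝕜 E] :
    FunLike (NormedSpace.Dual 𝕜 E) E 𝕜 :=
  inferInstanceAs (FunLike (E →L[𝕜] 𝕜) E 𝕜)

/-- The bounded approximation property. -/
def HasBAP (E : Type*) [NormedAddCommGroup E] [NormedSpace ℂ E] : Prop :=
  ∃ lam : ℝ, 1 ≤ lam ∧ ∀ K : Set E, IsCompact K → ∀ ε : ℝ, 0 < ε →
    ∃ V : E →L[ℂ] E, FiniteDimensional ℂ ↥(LinearMap.range (V : E →ₗ[ℂ] E)) ∧ ‖V‖ ≤ lam ∧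
      ∀ x ∈ K, ‖V x - x‖ ≤ ε

set_option maxHeartbeats 1000000 in
theorem stmt13 (X Y : Type*) [NormedAddCommGroup X] [NormedSpace ℂ X] [CompleteSpace X]
    [NormedAddCommGroup Y] [NormedSpace ℂ Y] [CompleteSpace Y]
    (hBAP : HasBAP Y ∨ HasBAP (Dual ℂ X))
    (hP : ∃ P : (X →L[ℂ] Y) →L[ℂ] (X →L[ℂ] Y), (∀ T, P (P T) = P T) ∧
        Set.range P = {T : X →L[ℂ] Y | IsCompactOperator ⇑T})
    (hY : ∃ Q₁ : Dual ℂ (Dual ℂ Y) →L[ℂ] Y, ∀ y : Y, Q₁ (inclusionInDoubleDual ℂ Y y) = y) :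
    ∃ Q : Dual ℂ (Dual ℂ ↥(KOp X Y)) →L[ℂ] ↥(KOp X Y),
      ∀ S : ↥(KOp X Y), Q (inclusionInDoubleDual ℂ ↥(KOp X Y) S) = S := by
  obtain ⟨P, hPP, hPrange⟩ := hP
  obtain ⟨Q₁, hQ₁⟩ := hY
  classical
  set E := X →L[ℂ] Y
  set M := KOp X Y with hM
  letI iM1 : SeminormedAddCommGroup ↥M := M.seminormedAddCommGroup
  letI iM2 : NormedSpace ℂ ↥M := M.normedSpace
  -- inclusion and corestricted projection
  let j : ↥M →L[ℂ] E := M.subtypeL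
  have hmem : ∀ T : E, P T ∈ M := by
    intro T
    have : P T ∈ Set.range P := ⟨T, rfl⟩
    rw [hPrange] at this
    exact this
  let P' : E →L[ℂ] ↥M := P.codRestrict M hmem
  have hP'j : ∀ S : ↥M, P' (j S) = S := by
    intro S
    apply Subtype.ext
    have hS : (S : E) ∈ Set.range P := by
      rw [hPrange]; exact S.2
    obtain ⟨T₀, hT₀⟩ := hS
    show P (j S) = (S : E)
    have : j S = P T₀ := hT₀.symm
    rw [this, hPP, hT₀]
  -- evaluation maps
  let A0 : X →L[ℂ] (↥M →L[ℂ] Y) :=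
    ((ContinuousLinearMap.compL ℂ ↥M E Y).flip j).comp (ContinuousLinearMap.apply ℂ Y)
  let A : X →L[ℂ] (Dual ℂ Y →L[ℂ] Dual ℂ ↥M) :=
    ((ContinuousLinearMap.compL ℂ ↥M Y ℂ).flip).comp A0
  -- the main map from the bidual of M to E
  let F : Dual ℂ (Dual ℂ ↥M) →L[ℂ] E :=
    (ContinuousLinearMap.compL ℂ X (Dual ℂ (Dual ℂ Y)) Y Q₁).comp
      ((((ContinuousLinearMap.compL ℂ X (Dual ℂ Y →L[ℂ] Dual ℂ ↥M)
          (Dual ℂ Y →L[ℂ] ℂ)).flip A).comp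
        (ContinuousLinearMap.compL ℂ (Dual ℂ Y) (Dual ℂ ↥M) ℂ)))
  refine ⟨P'.comp F, ?_⟩
  intro S
  have hF : F (inclusionInDoubleDual ℂ ↥M S) = j S := by
    ext x
    show Q₁ ((inclusionInDoubleDual ℂ ↥M S).comp (A x)) = (S : E) x
    have hfun : (inclusionInDoubleDual ℂ ↥M S).comp (A x)
        = inclusionInDoubleDual ℂ Y ((S : E) x) := by
      ext f
      show A x f S = f ((S : E) x)
      simp only [A, A0, ContinuousLinearMap.comp_apply,
        ContinuousLinearMap.flip_apply, ContinuousLinearMap.compL_apply,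
        ContinuousLinearMap.apply_apply]
      rfl
    rw [hfun, hQ₁]
  show P' (F (inclusionInDoubleDual ℂ ↥M S)) = S
  rw [hF]
  exact hP'j S
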